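/- arXiv:1710.03884 — 9 statements merged into one kernel-verified Lean document; each statement's English description precedes it below -/
import Mathlib

section
/- Let (M,g,J) be an almost anti-Hermitian manifold with Levi-Civita connection ∇. If there is a real constant ε such that (∇_{JX} J)Y = ε·J(∇_X J)Y for all vector fields X,Y, then ∇J ≡ 0, i.e. (M,g,J) is anti-Kähler. -/
/-!
Write `A_X = ⁅∇_X, J⁆ = ∇_X J`. Metric compatibility makes `∇_X` skew-adjoint, so `A_X` is
self-adjoint, and `J² = -1` makes `A_X` anticommute with `J`; hence `J A_X` is skew-adjoint.
The hypothesis `A_{JX} = ε J A_X` therefore says that `A_{JX}` is both self-adjoint and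
skew-adjoint, so it vanishes by nondegeneracy, for every `X`. Finally `A_X = -A_{J(JX)} = 0`.
-/

namespace LinearMap

variable {R M M₂ : Type*} [CommRing R] [AddCommGroup M] [Module R M]
  [AddCommGroup M₂] [Module R M₂] {B : M →ₗ[R] M →ₗ[R] M₂}

theorem eq_zero_of_isSelfAdjoint_of_isSkewAdjoint [IsAddTorsionFree M₂] (hB : B.SeparatingLeft)
    {f : M → M} (hself : B.IsSelfAdjoint f) (hskew : B.IsSkewAdjoint f) : f = 0 := by
  funext x
  refine hB _ fun y => ?_
  have h := hskew x y
  rw [hself x y, Pi.neg_apply, map_neg] at h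
  rw [hself x y]
  exact self_eq_neg.1 h

theorem isSkewAdjoint_of_add_eq_zero {f : Module.End R M} (h : ∀ x y, B (f x) y + B x (f y) = 0) :
    B.IsSkewAdjoint f := fun x y => by
  rw [Pi.neg_apply, map_neg]
  exact eq_neg_of_add_eq_zero_left (h x y)

theorem IsSkewAdjoint.smul {f : Module.End R M} (c : R) (hf : B.IsSkewAdjoint f) :
    B.IsSkewAdjoint (c • f) :=
  (B.mem_skewAdjointSubmodule _).1 (Submodule.smul_mem _ c ((B.mem_skewAdjointSubmodule f).2 hf))

theorem isSelfAdjoint_lie_of_isSkewAdjoint {n j : Module.End R M} (hn : B.IsSkewAdjoint n)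
    (hj : B.IsSelfAdjoint j) : B.IsSelfAdjoint ⇑⁅n, j⁆ := by
  have hn' : B.IsAdjointPair B n ⇑(-n) := hn
  have h := (hn'.mul hj).sub (hj.mul hn')
  intro x y
  simpa [Ring.lie_def, neg_add_eq_sub] using h x y

theorem isSkewAdjoint_mul_of_anticommute {j s : Module.End R M} (hj : B.IsSelfAdjoint j)
    (hs : B.IsSelfAdjoint s) (hanti : s * j = -(j * s)) : B.IsSkewAdjoint (j * s) := by
  have h := hj.mul hs
  rw [hanti] at h
  exact h

end LinearMap

theorem lie_mul_eq_neg_mul_lie_of_mul_self_eq_neg_one {A : Type*} [Ring A] {j : A}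
    (hj : j * j = -1) (n : A) : ⁅n, j⁆ * j = -(j * ⁅n, j⁆) := by
  rw [Ring.lie_def, sub_mul, mul_sub, mul_assoc, hj, ← mul_assoc, ← mul_assoc, hj]
  noncomm_ring

theorem antiKaehler_of_nablaJ_relation_general
    (V : Type*) [AddCommGroup V] [Module ℝ V]
    (g : V →ₗ[ℝ] V →ₗ[ℝ] ℝ)
    (hnd : ∀ Y, (∀ Z, g Y Z = 0) → Y = 0)
    (J : V →ₗ[ℝ] V) (hJ2 : ∀ Y, J (J Y) = -Y)
    (hJsym : ∀ Y Z, g (J Y) Z = g Y (J Z))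
    (nabla : V →ₗ[ℝ] V →ₗ[ℝ] V)
    (hcompat : ∀ X Y Z, g (nabla X Y) Z + g Y (nabla X Z) = 0)
    (ε : ℝ)
    (hyp : ∀ X Y, nabla (J X) (J Y) - J (nabla (J X) Y)
        = ε • J (nabla X (J Y) - J (nabla X Y))) :
    ∀ X Y, nabla X (J Y) = J (nabla X Y) := by
  have hJJ : J * J = -1 := LinearMap.ext hJ2
  have hA_selfAdj : ∀ X, g.IsSelfAdjoint ⇑⁅nabla X, J⁆ := fun X =>
    LinearMap.isSelfAdjoint_lie_of_isSkewAdjoint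
      (LinearMap.isSkewAdjoint_of_add_eq_zero (hcompat X)) hJsym
  have hA_J_eq_zero : ∀ X, ⁅nabla (J X), J⁆ = 0 := fun X => by
    have hrel : ⁅nabla (J X), J⁆ = ε • (J * ⁅nabla X, J⁆) :=
      LinearMap.ext fun Y => by simpa [Ring.lie_def] using hyp X Y
    refine DFunLike.coe_injective <|
      LinearMap.eq_zero_of_isSelfAdjoint_of_isSkewAdjoint hnd (hA_selfAdj _) ?_
    rw [hrel]
    exact (LinearMap.isSkewAdjoint_mul_of_anticommute hJsym (hA_selfAdj X)
      (lie_mul_eq_neg_mul_lie_of_mul_self_eq_neg_one hJJ _)).smul ε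
  intro X Y
  simpa [Ring.lie_def, hJ2, neg_add_eq_zero] using LinearMap.congr_fun (hA_J_eq_zero (J X)) Y

/-- Algebraic model of the proposition: if an almost anti-Hermitian structure
(`g` symmetric nondegenerate, `J² = -Id`, `J` `g`-symmetric, `∇` metric
compatible) satisfies `(∇_{JX} J) Y = ε • J ((∇_X J) Y)` for some real
constant `ε`, then `∇ J ≡ 0`, i.e. the structure is anti-Kähler. -/
theorem antiKaehler_of_nablaJ_relation
    (V : Type*) [AddCommGroup V] [Module ℝ V]
    (g : V →ₗ[ℝ] V →ₗ[ℝ] ℝ)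
    (hsymm : ∀ Y Z, g Y Z = g Z Y)
    (hnd : ∀ Y, (∀ Z, g Y Z = 0) → Y = 0)
    (J : V →ₗ[ℝ] V) (hJ2 : ∀ Y, J (J Y) = -Y)
    (hJsym : ∀ Y Z, g (J Y) Z = g Y (J Z))
    (nabla : V →ₗ[ℝ] V →ₗ[ℝ] V)
    (hcompat : ∀ X Y Z, g (nabla X Y) Z + g Y (nabla X Z) = 0)
    (ε : ℝ)
    (hyp : ∀ X Y, nabla (J X) (J Y) - J (nabla (J X) Y)
        = ε • J (nabla X (J Y) - J (nabla X Y))) :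
    ∀ X Y, nabla X (J Y) = J (nabla X Y) :=
  antiKaehler_of_nablaJ_relation_general V g hnd J hJ2 hJsym nabla hcompat ε hyp
end

section
/- Let G be a Lie group with a left invariant pseudo-Riemannian metric g and a left invariant almost complex structure J such that (g,J) is almost anti-Hermitian. If the Levi-Civita connection satisfies ∇_{JX}Y = -J∇_X Y for all left invariant vector fields X, Y, then (G,g,J) is anti-Kähler and J is an abelian complex structure, i.e. [JX,JY] = [X,Y] on the Lie algebra. -/
/-!
The Koszul formula makes `∇` metric, `B (∇_X Y) Z = -B (∇_X Z) Y`, and torsion-free. Since `J` is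
`B`-self-adjoint, the chain
`B (∇_X JY) Z = -B (J ∇_X Z) Y = B (∇_{JX} Z) Y = -B (∇_{JX} Y) Z = B (J ∇_X Y) Z`
gives `∇_X J = J ∇_X`. Then torsion-freeness yields
`[JX, JY] = ∇_{JX} JY - ∇_{JY} JX = -J² ∇_X Y + J² ∇_Y X = [X, Y]`.
-/

theorem LinearMap.SeparatingLeft.eq_of_forall_apply_eq {R M N P : Type*} [CommRing R]
    [AddCommGroup M] [Module R M] [AddCommGroup N] [Module R N] [AddCommGroup P] [Module R P]
    {B : M →ₗ[R] N →ₗ[R] P} (hB : B.SeparatingLeft) {x y : M} (h : ∀ z, B x z = B y z) :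
    x = y :=
  sub_eq_zero.1 <| hB _ fun z => by rw [map_sub, LinearMap.sub_apply, h, sub_self]

section AntiHermitian

variable {R V : Type*} [CommRing R] [AddCommGroup V] [Module R V]
  {B : V →ₗ[R] V →ₗ[R] R} {J : V →ₗ[R] V}

theorem isSelfAdjoint_of_antiHermitian (hJ2 : ∀ X, J (J X) = -X)
    (hJB : ∀ X Y, B (J X) (J Y) = -B X Y) : B.IsSelfAdjoint J := fun X Y => by
  simpa [hJ2] using hJB X (J Y)

theorem nabla_map_eq_map_nabla {nabla : V →ₗ[R] V →ₗ[R] V} (hB : B.SeparatingLeft)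
    (hmetric : ∀ X Y Z, B (nabla X Y) Z = -B (nabla X Z) Y) (hJ : B.IsSelfAdjoint J)
    (hyp : ∀ X Y, nabla (J X) Y = -J (nabla X Y)) (X Y : V) :
    nabla X (J Y) = J (nabla X Y) :=
  hB.eq_of_forall_apply_eq fun Z => calc
    B (nabla X (J Y)) Z = -B (J (nabla X Z)) Y := by rw [hmetric, hJ]
    _ = B (nabla (J X) Z) Y := by rw [hyp, map_neg, LinearMap.neg_apply]
    _ = -B (nabla (J X) Y) Z := hmetric _ _ _
    _ = B (J (nabla X Y)) Z := by rw [hyp, map_neg, LinearMap.neg_apply, neg_neg]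

end AntiHermitian

theorem lie_map_map_eq_lie {R V : Type*} [CommRing R] [LieRing V] [LieAlgebra R V]
    {J : V →ₗ[R] V} {nabla : V →ₗ[R] V →ₗ[R] V}
    (htorsion : ∀ X Y, nabla X Y - nabla Y X = ⁅X, Y⁆) (hJ2 : ∀ X, J (J X) = -X)
    (hyp : ∀ X Y, nabla (J X) Y = -J (nabla X Y))
    (hkaehler : ∀ X Y, nabla X (J Y) = J (nabla X Y)) (X Y : V) :
    ⁅J X, J Y⁆ = ⁅X, Y⁆ := calc
  ⁅J X, J Y⁆ = nabla (J X) (J Y) - nabla (J Y) (J X) := (htorsion _ _).symm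
  _ = nabla X Y - nabla Y X := by simp only [hyp, hkaehler, hJ2, neg_neg]
  _ = ⁅X, Y⁆ := htorsion X Y

/-- The Koszul formula on left invariant fields, where the terms `X (B Y Z)` vanish. -/
def IsLeviCivita {V : Type*} [LieRing V] [LieAlgebra ℝ V] (B : V →ₗ[ℝ] V →ₗ[ℝ] ℝ)
    (nabla : V →ₗ[ℝ] V →ₗ[ℝ] V) : Prop :=
  ∀ X Y Z, 2 * B (nabla X Y) Z = B ⁅X, Y⁆ Z - B ⁅Y, Z⁆ X + B ⁅Z, X⁆ Y

namespace IsLeviCivita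

variable {V : Type*} [LieRing V] [LieAlgebra ℝ V] {B : V →ₗ[ℝ] V →ₗ[ℝ] ℝ}
  {nabla : V →ₗ[ℝ] V →ₗ[ℝ] V}

theorem apply_nabla_swap (h : IsLeviCivita B nabla) (X Y Z : V) :
    B (nabla X Y) Z = -B (nabla X Z) Y := by
  have hXYZ := h X Y Z
  have hXZY := h X Z Y
  rw [← lie_skew Z Y, ← lie_skew X Z, ← lie_skew Y X] at hXZY
  simp only [map_neg, LinearMap.neg_apply] at hXZY
  linarith

theorem sub_swap_eq_lie (h : IsLeviCivita B nabla) (hB : B.SeparatingLeft) (X Y : V) :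
    nabla X Y - nabla Y X = ⁅X, Y⁆ :=
  hB.eq_of_forall_apply_eq fun Z => by
    have hXYZ := h X Y Z
    have hYXZ := h Y X Z
    rw [← lie_skew Y X, ← lie_skew Z Y, ← lie_skew X Z] at hYXZ
    simp only [map_neg, LinearMap.neg_apply] at hYXZ
    rw [map_sub, LinearMap.sub_apply]
    linarith

end IsLeviCivita

theorem antiKaehler_abelian_of_nabla_anticomm_general
    (V : Type*) [LieRing V] [LieAlgebra ℝ V]
    (B : V →ₗ[ℝ] V →ₗ[ℝ] ℝ)
    (hnd : ∀ X, (∀ Y, B X Y = 0) → X = 0)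
    (J : V →ₗ[ℝ] V) (hJ2 : ∀ X, J (J X) = -X)
    (hJB : ∀ X Y, B (J X) (J Y) = - B X Y)
    (nabla : V →ₗ[ℝ] V →ₗ[ℝ] V)
    (hKoszul : ∀ X Y Z, 2 * B (nabla X Y) Z
        = B ⁅X, Y⁆ Z - B ⁅Y, Z⁆ X + B ⁅Z, X⁆ Y)
    (hyp : ∀ X Y, nabla (J X) Y = - J (nabla X Y)) :
    (∀ X Y, nabla X (J Y) = J (nabla X Y)) ∧
    (∀ X Y, ⁅J X, J Y⁆ = ⁅X, Y⁆) := by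
  have hLC : IsLeviCivita B nabla := hKoszul
  have hkaehler := nabla_map_eq_map_nabla hnd hLC.apply_nabla_swap
    (isSelfAdjoint_of_antiHermitian hJ2 hJB) hyp
  exact ⟨hkaehler, lie_map_map_eq_lie (hLC.sub_swap_eq_lie hnd) hJ2 hyp hkaehler⟩

/-- Lie-algebra formulation: a left invariant almost anti-Hermitian structure
(inner product `B`, complex structure `J` with `B(JX,JY) = -B(X,Y)`, and
Levi-Civita connection `∇` given by the Koszul formula) satisfying
`∇_{JX} Y = -J ∇_X Y` is anti-Kähler (`∇_X (JY) = J ∇_X Y`) and `J` is an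
abelian complex structure (`[JX,JY] = [X,Y]`). -/
theorem antiKaehler_abelian_of_nabla_anticomm
    (V : Type*) [LieRing V] [LieAlgebra ℝ V]
    (B : V →ₗ[ℝ] V →ₗ[ℝ] ℝ)
    (hsymm : ∀ X Y, B X Y = B Y X)
    (hnd : ∀ X, (∀ Y, B X Y = 0) → X = 0)
    (J : V →ₗ[ℝ] V) (hJ2 : ∀ X, J (J X) = -X)
    (hJB : ∀ X Y, B (J X) (J Y) = - B X Y)
    (nabla : V →ₗ[ℝ] V →ₗ[ℝ] V)
    (hKoszul : ∀ X Y Z, 2 * B (nabla X Y) Z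
        = B ⁅X, Y⁆ Z - B ⁅Y, Z⁆ X + B ⁅Z, X⁆ Y)
    (hyp : ∀ X Y, nabla (J X) Y = - J (nabla X Y)) :
    (∀ X Y, nabla X (J Y) = J (nabla X Y)) ∧
    (∀ X Y, ⁅J X, J Y⁆ = ⁅X, Y⁆) :=
  antiKaehler_abelian_of_nabla_anticomm_general V B hnd J hJ2 hJB nabla hKoszul hyp
end

section
/- Let 𝔤 be a Lie algebra with inner product ⟨·,·⟩ and complex structure J (J² = -Id, ⟨JX,JY⟩ = -⟨X,Y⟩), and let ∇ be the Levi-Civita connection defined via the Koszul formula. If ∇_{JX}Y = J∇_X Y for all X,Y ∈ 𝔤, then the structure is anti-Kähler (∇_X(JY) = J∇_X Y for all X,Y) and J is bi-invariant: [JX,Y] = J[X,Y] for all X,Y ∈ 𝔤. -/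
/-!
Since `J` is self-adjoint for `B`, the hypothesis turns the Koszul formula into the identity
`K(JX, Y, Z) = K(X, Y, JZ)` between right-hand sides `K` of the Koszul formula. In terms of the
defect `f(X, Y, Z) = B([JX, Y] - J[X, Y], Z)` this is one linear relation between the values of
`f` at the six permutations of `(X, Y, Z)`, and these relations force `f = 0`: `J` is
bi-invariant. Bi-invariance in turn gives `K(X, JY, Z) = K(X, Y, JZ)`, which by the Koszul
formula is `∇_X (JY) = J ∇_X Y`.
-/

theorem eq_zero_of_forall_sub_sub_sub_eq_zero {K α : Type*} [Field K] [NeZero (2 : K)]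
    {f : α → α → α → K} (h : ∀ x y z, f x y z - f z y x - f x z y - f z x y = 0)
    (x y z : α) : f x y z = 0 := by
  have h2 : 2 * f x y z = 0 := by
    linear_combination h x y z - h y x z - h y z x
  exact (mul_eq_zero.mp h2).resolve_left two_ne_zero

theorem LinearMap.SeparatingLeft.injective {R M N : Type*} [CommRing R] [AddCommGroup M]
    [Module R M] [AddCommGroup N] [Module R N] {B : M →ₗ[R] N →ₗ[R] R}
    (hB : B.SeparatingLeft) : Function.Injective B :=
  LinearMap.ker_eq_bot.mp (LinearMap.separatingLeft_iff_ker_eq_bot.mp hB)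

theorem isAdjointPair_self_of_map_map_eq_neg {R M : Type*} [CommRing R] [AddCommGroup M]
    [Module R M] {B : M →ₗ[R] M →ₗ[R] R} {J : M →ₗ[R] M} (hJ2 : ∀ x, J (J x) = -x)
    (hJB : ∀ x y, B (J x) (J y) = -B x y) : B.IsAdjointPair B J J := by
  intro x y
  have h := hJB (J x) y
  rw [hJ2, map_neg, LinearMap.neg_apply, neg_inj] at h
  exact h.symm

section

variable {K V : Type*} [Field K] [LieRing V] [LieAlgebra K V]

def koszul (B : V →ₗ[K] V →ₗ[K] K) (X Y Z : V) : K :=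
  B ⁅X, Y⁆ Z - B ⁅Y, Z⁆ X + B ⁅Z, X⁆ Y

variable {B : V →ₗ[K] V →ₗ[K] K} {J : V →ₗ[K] V} {nabla : V →ₗ[K] V →ₗ[K] V}

theorem koszul_J_left_eq_koszul_J_right
    (hKoszul : ∀ X Y Z, 2 * B (nabla X Y) Z = koszul B X Y Z) (hJ : B.IsAdjointPair B J J)
    (hnablaJ : ∀ X Y, nabla (J X) Y = J (nabla X Y)) (X Y Z : V) :
    koszul B (J X) Y Z = koszul B X Y (J Z) := by
  rw [← hKoszul, ← hKoszul, hnablaJ, hJ]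

theorem lie_J_left_eq_J_lie_of_koszul [NeZero (2 : K)] (hB : B.SeparatingLeft) (hJ : B.IsAdjointPair B J J)
    (h : ∀ X Y Z, koszul B (J X) Y Z = koszul B X Y (J Z)) (X Y : V) :
    ⁅J X, Y⁆ = J ⁅X, Y⁆ := by
  let f : V → V → V → K := fun X Y Z => B ⁅J X, Y⁆ Z - B ⁅X, Y⁆ (J Z)
  have hskew : ∀ U W T : V, B ⁅U, W⁆ T + B ⁅W, U⁆ T = 0 := by
    intro U W T
    rw [← lie_skew W U, map_neg, LinearMap.neg_apply, add_neg_cancel]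
  have hf : ∀ X Y Z, f X Y Z - f Z Y X - f X Z Y - f Z X Y = 0 := by
    intro X Y Z
    have hK := h X Y Z
    unfold koszul at hK
    linear_combination hK + hskew Z Y (J X) - hskew (J Z) Y X - hskew (J X) Z Y
      + hskew X Z (J Y)
  apply hB.injective
  ext Z
  rw [hJ]
  exact sub_eq_zero.mp (eq_zero_of_forall_sub_sub_sub_eq_zero hf X Y Z)

theorem lie_J_right_eq_J_lie (hbi : ∀ X Y, ⁅J X, Y⁆ = J ⁅X, Y⁆) (X Y : V) :
    ⁅X, J Y⁆ = J ⁅X, Y⁆ := by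
  rw [← lie_skew, hbi, ← map_neg, lie_skew]

theorem koszul_J_middle_eq_koszul_J_right (hJ : B.IsAdjointPair B J J)
    (hbi : ∀ X Y, ⁅J X, Y⁆ = J ⁅X, Y⁆) (X Y Z : V) :
    koszul B X (J Y) Z = koszul B X Y (J Z) := by
  simp only [koszul, lie_J_right_eq_J_lie hbi, hbi, hJ _ _]

theorem nabla_J_right_eq_J_nabla [NeZero (2 : K)] (hB : B.SeparatingLeft)
    (hJ : B.IsAdjointPair B J J) (hKoszul : ∀ X Y Z, 2 * B (nabla X Y) Z = koszul B X Y Z)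
    (hbi : ∀ X Y, ⁅J X, Y⁆ = J ⁅X, Y⁆) (X Y : V) :
    nabla X (J Y) = J (nabla X Y) := by
  apply hB.injective
  ext Z
  have h2 : 2 * B (nabla X (J Y)) Z = 2 * B (J (nabla X Y)) Z := by
    rw [hKoszul, hJ, hKoszul, koszul_J_middle_eq_koszul_J_right hJ hbi]
  exact mul_left_cancel₀ two_ne_zero h2

end

theorem antiKaehler_biinvariant_of_nabla_comm_general
    (V : Type*) [LieRing V] [LieAlgebra ℝ V]
    (B : V →ₗ[ℝ] V →ₗ[ℝ] ℝ)
    (hnd : ∀ X, (∀ Y, B X Y = 0) → X = 0)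
    (J : V →ₗ[ℝ] V) (hJ2 : ∀ X, J (J X) = -X)
    (hJB : ∀ X Y, B (J X) (J Y) = - B X Y)
    (nabla : V →ₗ[ℝ] V →ₗ[ℝ] V)
    (hKoszul : ∀ X Y Z, 2 * B (nabla X Y) Z
        = B ⁅X, Y⁆ Z - B ⁅Y, Z⁆ X + B ⁅Z, X⁆ Y)
    (hyp : ∀ X Y, nabla (J X) Y = J (nabla X Y)) :
    (∀ X Y, nabla X (J Y) = J (nabla X Y)) ∧
    (∀ X Y, ⁅J X, Y⁆ = J ⁅X, Y⁆) := by
  have hJ : B.IsAdjointPair B J J := isAdjointPair_self_of_map_map_eq_neg hJ2 hJB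
  have hbi : ∀ X Y, ⁅J X, Y⁆ = J ⁅X, Y⁆ :=
    lie_J_left_eq_J_lie_of_koszul hnd hJ (koszul_J_left_eq_koszul_J_right hKoszul hJ hyp)
  exact ⟨nabla_J_right_eq_J_nabla hnd hJ hKoszul hbi, hbi⟩

/-- Lie-algebra formulation: an almost anti-Hermitian structure whose
Levi-Civita connection (Koszul formula) satisfies `∇_{JX} Y = J ∇_X Y` is
anti-Kähler and `J` is bi-invariant: `[JX,Y] = J[X,Y]`. -/
theorem antiKaehler_biinvariant_of_nabla_comm
    (V : Type*) [LieRing V] [LieAlgebra ℝ V]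
    (B : V →ₗ[ℝ] V →ₗ[ℝ] ℝ)
    (hsymm : ∀ X Y, B X Y = B Y X)
    (hnd : ∀ X, (∀ Y, B X Y = 0) → X = 0)
    (J : V →ₗ[ℝ] V) (hJ2 : ∀ X, J (J X) = -X)
    (hJB : ∀ X Y, B (J X) (J Y) = - B X Y)
    (nabla : V →ₗ[ℝ] V →ₗ[ℝ] V)
    (hKoszul : ∀ X Y Z, 2 * B (nabla X Y) Z
        = B ⁅X, Y⁆ Z - B ⁅Y, Z⁆ X + B ⁅Z, X⁆ Y)
    (hyp : ∀ X Y, nabla (J X) Y = J (nabla X Y)) :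
    (∀ X Y, nabla X (J Y) = J (nabla X Y)) ∧
    (∀ X Y, ⁅J X, Y⁆ = J ⁅X, Y⁆) :=
  antiKaehler_biinvariant_of_nabla_comm_general V B hnd J hJ2 hJB nabla hKoszul hyp
end

section
/- Let 𝔤 be a Lie algebra with inner product ⟨·,·⟩ and complex structure J satisfying J² = -Id and ⟨JX,JY⟩ = -⟨X,Y⟩ (left invariant almost anti-Hermitian structure), and suppose the structure is anti-Kähler (∇J = 0 for the Levi-Civita connection ∇) with J abelian ([JX,JY] = [X,Y]). Then ∇_{JX}Y = -J∇_X Y for all X,Y ∈ 𝔤. -/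
/-!
Put `α(X, Y, Z) = ⟨∇_{JX} Y + J ∇_X Y, Z⟩`. Torsion-freeness of `∇`, `∇J = 0` and the identity
`[JX, Y] = [JY, X]` (a rewriting of `[JX, JY] = [X, Y]`) make `α` symmetric in `X, Y`; metric
compatibility of `∇`, `∇J = 0` and the self-adjointness of `J` make it skew in `Y, Z`. A form
symmetric in one pair of variables and skew in an overlapping pair vanishes, so
`∇_{JX} Y + J ∇_X Y = 0` by nondegeneracy.
-/

theorem eq_zero_of_symm_of_antisymm {V G : Type*} [AddGroup G] [IsAddTorsionFree G]
    (α : V → V → V → G)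
    (hsymm : ∀ X Y Z, α X Y Z = α Y X Z) (hanti : ∀ X Y Z, α X Y Z = -α X Z Y) (X Y Z : V) :
    α X Y Z = 0 :=
  self_eq_neg.mp <| calc
    α X Y Z = α Y X Z := hsymm X Y Z
    _ = -α Y Z X := hanti Y X Z
    _ = -α Z Y X := by rw [hsymm Y Z X]
    _ = α Z X Y := by rw [hanti Z Y X, neg_neg]
    _ = α X Z Y := hsymm Z X Y
    _ = -α X Y Z := hanti X Z Y

theorem lie_apply_comm_of_abelian {V : Type*} [LieRing V] (J : V → V) (hJ2 : ∀ X, J (J X) = -X)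
    (habel : ∀ X Y, ⁅J X, J Y⁆ = ⁅X, Y⁆) (X Y : V) : ⁅J X, Y⁆ = ⁅J Y, X⁆ := by
  have h := habel Y (J X)
  rw [hJ2, lie_neg] at h
  rw [← lie_skew, ← h, neg_neg]

theorem apply_J_left_eq_apply_J_right {R V : Type*} [CommRing R] [AddCommGroup V] [Module R V]
    {B : V →ₗ[R] V →ₗ[R] R} {J : V →ₗ[R] V} (hJ2 : ∀ X, J (J X) = -X)
    (hJB : ∀ X Y, B (J X) (J Y) = -B X Y) (X Y : V) : B (J X) Y = B X (J Y) := by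
  have h := hJB X (J Y)
  rwa [hJ2, map_neg, neg_inj] at h

def alpha {R V : Type*} [CommRing R] [AddCommGroup V] [Module R V] (B : V →ₗ[R] V →ₗ[R] R)
    (nabla : V →ₗ[R] V →ₗ[R] V) (J : V →ₗ[R] V) (X Y Z : V) : R :=
  B (nabla (J X) Y + J (nabla X Y)) Z

section Koszul

variable {K V : Type*} [Field K] [CharZero K] [LieRing V] [Module K V]
  {B : V →ₗ[K] V →ₗ[K] K} {nabla : V →ₗ[K] V →ₗ[K] V}

theorem apply_nabla_swap_of_koszul
    (hKoszul : ∀ X Y Z, 2 * B (nabla X Y) Z = B ⁅X, Y⁆ Z - B ⁅Y, Z⁆ X + B ⁅Z, X⁆ Y)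
    (X Y Z : V) : B (nabla X Y) Z = -B (nabla X Z) Y := by
  have h := hKoszul X Z Y
  rw [← lie_skew X Z, ← lie_skew Z Y, ← lie_skew Y X] at h
  simp only [map_neg, LinearMap.neg_apply] at h
  linear_combination (hKoszul X Y Z + h) / 2

theorem apply_nabla_sub_swap_of_koszul
    (hKoszul : ∀ X Y Z, 2 * B (nabla X Y) Z = B ⁅X, Y⁆ Z - B ⁅Y, Z⁆ X + B ⁅Z, X⁆ Y)
    (X Y Z : V) : B (nabla X Y) Z - B (nabla Y X) Z = B ⁅X, Y⁆ Z := by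
  have h := hKoszul Y X Z
  rw [← lie_skew Y X, ← lie_skew X Z, ← lie_skew Z Y] at h
  simp only [map_neg, LinearMap.neg_apply] at h
  linear_combination (hKoszul X Y Z - h) / 2

theorem alpha_comm {J : V →ₗ[K] V}
    (hKoszul : ∀ X Y Z, 2 * B (nabla X Y) Z = B ⁅X, Y⁆ Z - B ⁅Y, Z⁆ X + B ⁅Z, X⁆ Y)
    (hJ2 : ∀ X, J (J X) = -X) (hAK : ∀ X Y, nabla X (J Y) = J (nabla X Y))
    (habel : ∀ X Y, ⁅J X, J Y⁆ = ⁅X, Y⁆) (X Y Z : V) :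
    alpha B nabla J X Y Z = alpha B nabla J Y X Z := by
  simp only [alpha, map_add, LinearMap.add_apply, ← hAK]
  have h1 := apply_nabla_sub_swap_of_koszul hKoszul (J X) Y Z
  have h2 := apply_nabla_sub_swap_of_koszul hKoszul X (J Y) Z
  rw [← lie_skew X (J Y), ← lie_apply_comm_of_abelian J hJ2 habel X Y, map_neg,
    LinearMap.neg_apply] at h2
  linear_combination h1 + h2

theorem alpha_swap {J : V →ₗ[K] V}
    (hKoszul : ∀ X Y Z, 2 * B (nabla X Y) Z = B ⁅X, Y⁆ Z - B ⁅Y, Z⁆ X + B ⁅Z, X⁆ Y)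
    (hJ2 : ∀ X, J (J X) = -X) (hJB : ∀ X Y, B (J X) (J Y) = -B X Y)
    (hAK : ∀ X Y, nabla X (J Y) = J (nabla X Y)) (X Y Z : V) :
    alpha B nabla J X Y Z = -alpha B nabla J X Z Y := by
  simp only [alpha, map_add, LinearMap.add_apply]
  have h1 := apply_nabla_swap_of_koszul hKoszul (J X) Y Z
  have h2 : B (J (nabla X Y)) Z = -B (J (nabla X Z)) Y := by
    rw [apply_J_left_eq_apply_J_right hJ2 hJB, apply_nabla_swap_of_koszul hKoszul, hAK]
  linear_combination h1 + h2

end Koszul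

theorem nabla_anticomm_of_antiKaehler_abelian_general
    (V : Type*) [LieRing V] [LieAlgebra ℝ V]
    (B : V →ₗ[ℝ] V →ₗ[ℝ] ℝ)
    (hnd : ∀ X, (∀ Y, B X Y = 0) → X = 0)
    (J : V →ₗ[ℝ] V) (hJ2 : ∀ X, J (J X) = -X)
    (hJB : ∀ X Y, B (J X) (J Y) = - B X Y)
    (nabla : V →ₗ[ℝ] V →ₗ[ℝ] V)
    (hKoszul : ∀ X Y Z, 2 * B (nabla X Y) Z
        = B ⁅X, Y⁆ Z - B ⁅Y, Z⁆ X + B ⁅Z, X⁆ Y)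
    (hAK : ∀ X Y, nabla X (J Y) = J (nabla X Y))
    (habel : ∀ X Y, ⁅J X, J Y⁆ = ⁅X, Y⁆) :
    ∀ X Y, nabla (J X) Y = - J (nabla X Y) := by
  intro X Y
  have hα : ∀ Z, alpha B nabla J X Y Z = 0 :=
    eq_zero_of_symm_of_antisymm _ (alpha_comm hKoszul hJ2 hAK habel)
      (alpha_swap hKoszul hJ2 hJB hAK) X Y
  exact eq_neg_of_add_eq_zero_left (hnd _ hα)

/-- If a left invariant anti-Kähler structure (`∇_X (JY) = J ∇_X Y` for the
Koszul Levi-Civita connection) has an abelian complex structure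
(`[JX,JY] = [X,Y]`), then `∇_{JX} Y = -J ∇_X Y`. -/
theorem nabla_anticomm_of_antiKaehler_abelian
    (V : Type*) [LieRing V] [LieAlgebra ℝ V]
    (B : V →ₗ[ℝ] V →ₗ[ℝ] ℝ)
    (hsymm : ∀ X Y, B X Y = B Y X)
    (hnd : ∀ X, (∀ Y, B X Y = 0) → X = 0)
    (J : V →ₗ[ℝ] V) (hJ2 : ∀ X, J (J X) = -X)
    (hJB : ∀ X Y, B (J X) (J Y) = - B X Y)
    (nabla : V →ₗ[ℝ] V →ₗ[ℝ] V)
    (hKoszul : ∀ X Y Z, 2 * B (nabla X Y) Z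
        = B ⁅X, Y⁆ Z - B ⁅Y, Z⁆ X + B ⁅Z, X⁆ Y)
    (hAK : ∀ X Y, nabla X (J Y) = J (nabla X Y))
    (habel : ∀ X Y, ⁅J X, J Y⁆ = ⁅X, Y⁆) :
    ∀ X Y, nabla (J X) Y = - J (nabla X Y) :=
  nabla_anticomm_of_antiKaehler_abelian_general V B hnd J hJ2 hJB nabla hKoszul hAK habel
end

section
/- Let 𝔤 be a Lie algebra with a nondegenerate symmetric bilinear form ⟨·,·⟩ and a bi-invariant complex structure J, i.e. J² = -Id, [JX,Y] = J[X,Y], and ⟨JX,JY⟩ = -⟨X,Y⟩. Then the Levi-Civita connection ∇ defined by the Koszul formula satisfies ∇_X(JY) = J(∇_X Y) for all X,Y ∈ 𝔤; i.e. the corresponding left invariant almost anti-Hermitian structure on any Lie group with Lie algebra 𝔤 is anti-Kähler. -/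
/-!
Since `J² = -1`, the anti-isometry condition `⟨JX, JY⟩ = -⟨X, Y⟩` says that `J` is symmetric for
`⟨·,·⟩`, and bi-invariance lets `J` pass through either slot of the bracket. Moving `J` from `Y` to
`Z` term by term in the Koszul formula therefore gives `⟨∇_X (JY), Z⟩ = ⟨∇_X Y, JZ⟩ = ⟨J ∇_X Y, Z⟩`,
and nondegeneracy concludes.
-/

section Symmetric

variable {R M N : Type*} [CommRing R] [AddCommGroup M] [Module R M] [AddCommGroup N] [Module R N]

theorem LinearMap.apply_map_left_eq_apply_map_right_of_antiIsometry
    (B : M →ₗ[R] M →ₗ[R] N) (J : M →ₗ[R] M) (hJ2 : ∀ X, J (J X) = -X)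
    (hJB : ∀ X Y, B (J X) (J Y) = -B X Y) (X Y : M) :
    B (J X) Y = B X (J Y) := by
  simpa [hJ2] using hJB X (J Y)

theorem LinearMap.eq_of_forall_apply_eq_of_nondegenerate (B : M →ₗ[R] M →ₗ[R] N)
    (hnd : ∀ X, (∀ Y, B X Y = 0) → X = 0) {X X' : M} (h : ∀ Y, B X Y = B X' Y) : X = X' :=
  sub_eq_zero.mp <| hnd _ fun Y => by rw [map_sub, LinearMap.sub_apply, h, sub_self]

end Symmetric

theorem lie_map_right_of_lie_map_left {R L : Type*} [CommRing R] [LieRing L] [LieAlgebra R L]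
    (J : L →ₗ[R] L) (hbi : ∀ X Y, ⁅J X, Y⁆ = J ⁅X, Y⁆) (X Y : L) : ⁅X, J Y⁆ = J ⁅X, Y⁆ := by
  rw [← neg_neg ⁅X, J Y⁆, lie_skew, hbi, ← lie_skew X Y, map_neg]

theorem koszul_apply_map_eq_apply_apply_map {V : Type*} [LieRing V] [LieAlgebra ℝ V]
    (B : V →ₗ[ℝ] V →ₗ[ℝ] ℝ) (J : V →ₗ[ℝ] V) (nabla : V →ₗ[ℝ] V →ₗ[ℝ] V)
    (hJsymm : ∀ X Y, B (J X) Y = B X (J Y))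
    (hKoszul : ∀ X Y Z, 2 * B (nabla X Y) Z = B ⁅X, Y⁆ Z - B ⁅Y, Z⁆ X + B ⁅Z, X⁆ Y)
    (hbi : ∀ X Y, ⁅J X, Y⁆ = J ⁅X, Y⁆) (X Y Z : V) :
    B (nabla X (J Y)) Z = B (nabla X Y) (J Z) := by
  have hbi' := lie_map_right_of_lie_map_left J hbi
  have hJY := hKoszul X (J Y) Z
  have hJZ := hKoszul X Y (J Z)
  rw [hbi', hbi, hJsymm, hJsymm, ← hJsymm ⁅Z, X⁆] at hJY
  rw [hbi', hbi, hJsymm] at hJZ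
  linarith

theorem antiKaehler_of_biinvariant_general
    (V : Type*) [LieRing V] [LieAlgebra ℝ V]
    (B : V →ₗ[ℝ] V →ₗ[ℝ] ℝ)
    (hnd : ∀ X, (∀ Y, B X Y = 0) → X = 0)
    (J : V →ₗ[ℝ] V) (hJ2 : ∀ X, J (J X) = -X)
    (hJB : ∀ X Y, B (J X) (J Y) = - B X Y)
    (nabla : V →ₗ[ℝ] V →ₗ[ℝ] V)
    (hKoszul : ∀ X Y Z, 2 * B (nabla X Y) Z
        = B ⁅X, Y⁆ Z - B ⁅Y, Z⁆ X + B ⁅Z, X⁆ Y)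
    (hbi : ∀ X Y, ⁅J X, Y⁆ = J ⁅X, Y⁆) :
    ∀ X Y, nabla X (J Y) = J (nabla X Y) := by
  have hJsymm := B.apply_map_left_eq_apply_map_right_of_antiIsometry J hJ2 hJB
  intro X Y
  refine B.eq_of_forall_apply_eq_of_nondegenerate hnd fun Z => ?_
  rw [hJsymm, koszul_apply_map_eq_apply_apply_map B J nabla hJsymm hKoszul hbi]

/-- If `J` is a bi-invariant complex structure on a Lie algebra with an
anti-Hermitian inner product, then the Koszul Levi-Civita connection
satisfies `∇_X (JY) = J ∇_X Y`; i.e. any left invariant almost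
anti-Hermitian structure with bi-invariant `J` is anti-Kähler. -/
theorem antiKaehler_of_biinvariant
    (V : Type*) [LieRing V] [LieAlgebra ℝ V]
    (B : V →ₗ[ℝ] V →ₗ[ℝ] ℝ)
    (hsymm : ∀ X Y, B X Y = B Y X)
    (hnd : ∀ X, (∀ Y, B X Y = 0) → X = 0)
    (J : V →ₗ[ℝ] V) (hJ2 : ∀ X, J (J X) = -X)
    (hJB : ∀ X Y, B (J X) (J Y) = - B X Y)
    (nabla : V →ₗ[ℝ] V →ₗ[ℝ] V)
    (hKoszul : ∀ X Y Z, 2 * B (nabla X Y) Z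
        = B ⁅X, Y⁆ Z - B ⁅Y, Z⁆ X + B ⁅Z, X⁆ Y)
    (hbi : ∀ X Y, ⁅J X, Y⁆ = J ⁅X, Y⁆) :
    ∀ X Y, nabla X (J Y) = J (nabla X Y) :=
  antiKaehler_of_biinvariant_general V B hnd J hJ2 hJB nabla hKoszul hbi
end

section
/- Let 𝔤 be a unimodular Lie algebra with a complex structure J (J² = -Id). If Tr(ad_{JX}) = 0 for all X ∈ 𝔤 (e.g. 𝔤 unimodular), then the Killing form B satisfies B(JX,Y) = B(X,JY) for all X,Y, provided J is abelian ([JX,JY] = [X,Y]). Consequently B(JX,JY) = -B(X,Y). -/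
/-! Abelianness of `J` says `ad (J X) = -(ad X ∘ J)`. Moving `J` across the Killing form therefore
changes `B` by `tr (⁅ad X, ad Y⁆ ∘ J) = tr (ad ⁅X, Y⁆ ∘ J) = -tr (ad (J ⁅X, Y⁆))`, which vanishes
on a unimodular Lie algebra. -/

open LieAlgebra LinearMap

section AbelianComplexStructure

variable {R L : Type*} [CommRing R] [LieRing L] [LieAlgebra R L] {J : L →ₗ[R] L}

lemma ad_lie_eq_mul_sub (X Y : L) :
    ad R L ⁅X, Y⁆ = ad R L X * ad R L Y - ad R L Y * ad R L X := by
  ext Z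
  simp only [ad_apply, Module.End.mul_apply, LinearMap.sub_apply, lie_lie]

lemma lie_apply_left_eq_neg_lie_apply_right (hJ2 : ∀ X, J (J X) = -X)
    (habel : ∀ X Y, ⁅J X, J Y⁆ = ⁅X, Y⁆) (X Y : L) : ⁅J X, Y⁆ = -⁅X, J Y⁆ := by
  rw [← habel X (J Y), hJ2, lie_neg, neg_neg]

lemma ad_apply_eq_neg_ad_mul (hJ2 : ∀ X, J (J X) = -X)
    (habel : ∀ X Y, ⁅J X, J Y⁆ = ⁅X, Y⁆) (X : L) : ad R L (J X) = -(ad R L X * J) := by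
  ext Y
  exact lie_apply_left_eq_neg_lie_apply_right hJ2 habel X Y

lemma killingForm_apply_right_sub_apply_left (hJ2 : ∀ X, J (J X) = -X)
    (habel : ∀ X Y, ⁅J X, J Y⁆ = ⁅X, Y⁆) (X Y : L) :
    killingForm R L X (J Y) - killingForm R L (J X) Y = trace R L (ad R L (J ⁅X, Y⁆)) := by
  have hadJ := ad_apply_eq_neg_ad_mul hJ2 habel
  calc killingForm R L X (J Y) - killingForm R L (J X) Y
      = -trace R L (ad R L X * (ad R L Y * J)) + trace R L (ad R L X * J * ad R L Y) := by
        simp only [killingForm_apply_apply, ← Module.End.mul_eq_comp, hadJ, neg_mul, mul_neg,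
          map_neg, sub_neg_eq_add]
    _ = -trace R L ((ad R L X * ad R L Y - ad R L Y * ad R L X) * J) := by
        rw [trace_mul_cycle, sub_mul, map_sub, mul_assoc (ad R L X)]
        abel
    _ = trace R L (ad R L (J ⁅X, Y⁆)) := by
        rw [hadJ, ← ad_lie_eq_mul_sub, map_neg]

end AbelianComplexStructure

theorem killingForm_J_symmetric_of_unimodular_abelian_general
    (V : Type*) [LieRing V] [LieAlgebra ℝ V]
    (J : V →ₗ[ℝ] V) (hJ2 : ∀ X, J (J X) = -X)
    (habel : ∀ X Y, ⁅J X, J Y⁆ = ⁅X, Y⁆)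
    (hunimod : ∀ X : V, LinearMap.trace ℝ V (LieAlgebra.ad ℝ V X) = 0) :
    (∀ X Y : V, killingForm ℝ V (J X) Y = killingForm ℝ V X (J Y)) ∧
    (∀ X Y : V, killingForm ℝ V (J X) (J Y) = - killingForm ℝ V X Y) := by
  have hsymm : ∀ X Y : V, killingForm ℝ V (J X) Y = killingForm ℝ V X (J Y) := fun X Y =>
    (sub_eq_zero.mp <| by
      rw [killingForm_apply_right_sub_apply_left hJ2 habel, hunimod]).symm
  refine ⟨hsymm, fun X Y => ?_⟩
  rw [hsymm, hJ2, map_neg]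

/-- On a unimodular Lie algebra (`Tr(ad_X) = 0` for all `X`, hence in
particular `Tr(ad_{JX}) = 0`) with an abelian complex structure `J`
(`J² = -Id`, `[JX,JY] = [X,Y]`), the Killing form `B` satisfies
`B(JX,Y) = B(X,JY)`, and consequently `B(JX,JY) = -B(X,Y)`. -/
theorem killingForm_J_symmetric_of_unimodular_abelian
    (V : Type*) [LieRing V] [LieAlgebra ℝ V] [FiniteDimensional ℝ V]
    (J : V →ₗ[ℝ] V) (hJ2 : ∀ X, J (J X) = -X)
    (habel : ∀ X Y, ⁅J X, J Y⁆ = ⁅X, Y⁆)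
    (hunimod : ∀ X : V, LinearMap.trace ℝ V (LieAlgebra.ad ℝ V X) = 0) :
    (∀ X Y : V, killingForm ℝ V (J X) Y = killingForm ℝ V X (J Y)) ∧
    (∀ X Y : V, killingForm ℝ V (J X) (J Y) = - killingForm ℝ V X Y) :=
  killingForm_J_symmetric_of_unimodular_abelian_general V J hJ2 habel hunimod
end

section
/- Let 𝔤 be a Lie algebra with anti-Kähler structure (⟨·,·⟩, J) where J is abelian. Then the curvature R(X,Y)Z := ∇_X∇_Y Z - ∇_Y∇_X Z - ∇_{[X,Y]}Z vanishes identically; i.e. the associated left invariant pseudo-Riemannian metric is flat. Equivalently, with ∇_X Y = ½([X,Y] - J[X,JY]), one has ∇_{[X,Y]}Z = 0 for all X,Y,Z ∈ 𝔤. -/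
/-!
The Koszul formula makes `∇` torsion-free and `B`-skew, so its curvature has the usual
symmetries (first Bianchi identity, pair symmetry). Because `J` is abelian and `∇J = J∇`, the
tensor `∇_{JX}Y + J∇_XY` is symmetric in `X, Y` and `B`-skew in `Y, Z`, hence zero; therefore
`2∇_XY = [X,Y] + J[JX,Y]`, and with this formula the Jacobi identity gives `∇_X∇_Y = ∇_Y∇_X`,
i.e. `R(X,Y) = -∇_{[X,Y]}`. This is unchanged under `(X,Y) ↦ (JX,JY)`, whereas pair symmetry
and `∇J = J∇` give `R(JX,JY) = -R(X,Y)` for every anti-Kähler metric. Hence `R = 0`.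
-/

section Forms

variable {α M : Type*} [AddCommGroup M] [IsAddTorsionFree M]

theorem eq_zero_of_symm_of_antisymm_s15 (s : α → α → α → M)
    (h12 : ∀ x y z, s x y z = s y x z) (h23 : ∀ x y z, s x y z = -s x z y) (x y z : α) :
    s x y z = 0 :=
  self_eq_neg.mp <| calc
    s x y z = -s y z x := by rw [h12, h23]
    _ = s z x y := by rw [h12, h23, neg_neg]
    _ = -s x y z := by rw [h12, h23]

-- Milnor's octahedron: add the cyclic identities at `(c,a,b)`, `(a,b,d)`, `(b,d,c)`, `(d,c,a)`.
theorem eq_swap_pairs_of_cyclic (s : α → α → α → α → M)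
    (h12 : ∀ a b c d, s a b c d = -s b a c d) (h34 : ∀ a b c d, s a b c d = -s a b d c)
    (hcyc : ∀ a b c d, s a b c d + s b c a d + s c a b d = 0) (a b c d : α) :
    s a b c d = s c d a b := by
  apply IsAddTorsionFree.nsmul_right_injective two_ne_zero
  linear_combination (norm := module) hcyc c a b d - hcyc a b d c - hcyc b d c a + hcyc d c a b
    + h34 a b c d + h34 b d a c + h12 a d b c - h34 a d b c - h34 c a b d - h34 b c a d
    + h12 b c d a + h12 c d b a - h34 c d a b - h12 c d a b

end Forms

section Curvature

variable {R V : Type*} [CommRing R] [LieRing V] [LieAlgebra R V] (nabla : V →ₗ[R] V →ₗ[R] V)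

def curvature (X Y Z : V) : V :=
  nabla X (nabla Y Z) - nabla Y (nabla X Z) - nabla ⁅X, Y⁆ Z

variable {nabla}

theorem curvature_swap (X Y Z : V) : curvature nabla X Y Z = -curvature nabla Y X Z := by
  simp only [curvature, ← lie_skew Y X, map_neg, LinearMap.neg_apply]
  abel

theorem curvature_of_comm (hcomm : ∀ X Y Z, nabla X (nabla Y Z) = nabla Y (nabla X Z))
    (X Y Z : V) : curvature nabla X Y Z = -nabla ⁅X, Y⁆ Z := by
  rw [curvature, hcomm, sub_self, zero_sub]

theorem curvature_apply_map (J : V →ₗ[R] V) (hJ : ∀ X Y, nabla X (J Y) = J (nabla X Y))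
    (X Y Z : V) : curvature nabla X Y (J Z) = J (curvature nabla X Y Z) := by
  simp only [curvature, hJ, map_sub]

theorem curvature_cyclic (htors : ∀ X Y, nabla X Y - nabla Y X = ⁅X, Y⁆) (X Y Z : V) :
    curvature nabla X Y Z + curvature nabla Y Z X + curvature nabla Z X Y = 0 :=
  calc _ = nabla X (nabla Y Z - nabla Z Y) - nabla ⁅Y, Z⁆ X
        + (nabla Y (nabla Z X - nabla X Z) - nabla ⁅Z, X⁆ Y)
        + (nabla Z (nabla X Y - nabla Y X) - nabla ⁅X, Y⁆ Z) := by
          simp only [curvature, map_sub]; abel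
    _ = ⁅X, ⁅Y, Z⁆⁆ + ⁅Y, ⁅Z, X⁆⁆ + ⁅Z, ⁅X, Y⁆⁆ := by simp only [htors]
    _ = 0 := lie_jacobi X Y Z

variable {B : V →ₗ[R] V →ₗ[R] R}

theorem curvature_antisymm_right (hsymm : ∀ X Y, B X Y = B Y X)
    (hmetric : ∀ X Y Z, B (nabla X Y) Z = -B (nabla X Z) Y) (X Y Z W : V) :
    B (curvature nabla X Y Z) W = -B (curvature nabla X Y W) Z := by
  have hmove : ∀ X Y U W, B (nabla X (nabla Y U)) W = B (nabla Y (nabla X W)) U := by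
    intro X Y U W
    rw [hmetric, hsymm, hmetric, neg_neg]
  simp only [curvature, map_sub, LinearMap.sub_apply]
  rw [hmove X Y Z W, hmove Y X Z W, hmetric ⁅X, Y⁆ Z]
  ring

theorem curvature_pair_symm [IsAddTorsionFree R] (hsymm : ∀ X Y, B X Y = B Y X)
    (hmetric : ∀ X Y Z, B (nabla X Y) Z = -B (nabla X Z) Y)
    (htors : ∀ X Y, nabla X Y - nabla Y X = ⁅X, Y⁆) (X Y Z W : V) :
    B (curvature nabla X Y Z) W = B (curvature nabla Z W X) Y := by
  refine eq_swap_pairs_of_cyclic (fun X Y Z W => B (curvature nabla X Y Z) W) (fun X Y Z W => ?_)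
    (curvature_antisymm_right hsymm hmetric) (fun X Y Z W => ?_) X Y Z W
  · rw [curvature_swap, map_neg, LinearMap.neg_apply]
  · rw [← LinearMap.add_apply, ← LinearMap.add_apply, ← map_add, ← map_add,
      curvature_cyclic htors, map_zero, LinearMap.zero_apply]

theorem curvature_map_map_eq_neg [IsAddTorsionFree R] (hsymm : ∀ X Y, B X Y = B Y X)
    (hnd : ∀ X, (∀ Y, B X Y = 0) → X = 0)
    (hmetric : ∀ X Y Z, B (nabla X Y) Z = -B (nabla X Z) Y)
    (htors : ∀ X Y, nabla X Y - nabla Y X = ⁅X, Y⁆) {J : V →ₗ[R] V}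
    (hJB : ∀ X Y, B (J X) (J Y) = -B X Y) (hJ : ∀ X Y, nabla X (J Y) = J (nabla X Y))
    (X Y Z : V) : curvature nabla (J X) (J Y) Z = -curvature nabla X Y Z := by
  refine eq_neg_of_add_eq_zero_left (hnd _ fun W => ?_)
  rw [map_add, LinearMap.add_apply, curvature_pair_symm hsymm hmetric htors,
    curvature_apply_map J hJ, hJB, curvature_pair_symm hsymm hmetric htors Z W, neg_add_cancel]

end Curvature

section Koszul

variable {V : Type*} [LieRing V] [LieAlgebra ℝ V] {B : V →ₗ[ℝ] V →ₗ[ℝ] ℝ}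
  {nabla : V →ₗ[ℝ] V →ₗ[ℝ] V}

theorem apply_lie_swap (X Y Z : V) : B ⁅X, Y⁆ Z = -B ⁅Y, X⁆ Z := by
  rw [← lie_skew, map_neg, LinearMap.neg_apply]

theorem metric_of_koszul
    (hK : ∀ X Y Z, 2 * B (nabla X Y) Z = B ⁅X, Y⁆ Z - B ⁅Y, Z⁆ X + B ⁅Z, X⁆ Y) (X Y Z : V) :
    B (nabla X Y) Z = -B (nabla X Z) Y := by
  linarith [hK X Y Z, hK X Z Y, apply_lie_swap (B := B) X Y Z, apply_lie_swap (B := B) Y Z X,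
    apply_lie_swap (B := B) Z X Y]

theorem torsion_free_of_koszul (hnd : ∀ X, (∀ Y, B X Y = 0) → X = 0)
    (hK : ∀ X Y Z, 2 * B (nabla X Y) Z = B ⁅X, Y⁆ Z - B ⁅Y, Z⁆ X + B ⁅Z, X⁆ Y) (X Y : V) :
    nabla X Y - nabla Y X = ⁅X, Y⁆ := by
  refine sub_eq_zero.mp (hnd _ fun W => ?_)
  simp only [map_sub, LinearMap.sub_apply]
  linarith [hK X Y W, hK Y X W, apply_lie_swap (B := B) Y X W, apply_lie_swap (B := B) W Y X,
    apply_lie_swap (B := B) W X Y]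

end Koszul

section AbelianComplexStructure

variable {V : Type*} [LieRing V] [LieAlgebra ℝ V] {nabla : V →ₗ[ℝ] V →ₗ[ℝ] V} {J : V →ₗ[ℝ] V}

theorem lie_map_right_of_abelian (hJ2 : ∀ X, J (J X) = -X) (habel : ∀ X Y, ⁅J X, J Y⁆ = ⁅X, Y⁆)
    (X Y : V) : ⁅X, J Y⁆ = -⁅J X, Y⁆ := by
  rw [← habel, hJ2, lie_neg]

theorem nabla_map_left {B : V →ₗ[ℝ] V →ₗ[ℝ] ℝ} (hnd : ∀ X, (∀ Y, B X Y = 0) → X = 0)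
    (hmetric : ∀ X Y Z, B (nabla X Y) Z = -B (nabla X Z) Y)
    (htors : ∀ X Y, nabla X Y - nabla Y X = ⁅X, Y⁆) (hJ2 : ∀ X, J (J X) = -X)
    (hJB : ∀ X Y, B (J X) (J Y) = -B X Y) (hAK : ∀ X Y, nabla X (J Y) = J (nabla X Y))
    (habel : ∀ X Y, ⁅J X, J Y⁆ = ⁅X, Y⁆) (X Y : V) : nabla (J X) Y = -J (nabla X Y) := by
  set S : V → V → V := fun X Y => nabla (J X) Y + J (nabla X Y) with hS
  have hS_symm : ∀ X Y, S X Y = S Y X := by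
    intro X Y
    have h : J (nabla (J X) Y - nabla (J Y) X) = nabla X Y - nabla Y X := by
      rw [map_sub, ← hAK, ← hAK, htors, htors, habel]
    rw [← sub_eq_zero]
    calc S X Y - S Y X = (nabla (J X) Y - nabla (J Y) X) + J (nabla X Y - nabla Y X) := by
          simp only [hS, map_sub]; abel
      _ = 0 := by rw [← h, hJ2, add_neg_cancel]
  have hJ_move : ∀ U W, B (J U) W = B U (J W) := by
    intro U W
    simpa [hJ2] using hJB U (J W)
  have hS_skew : ∀ X Y Z, B (S X Y) Z = -B (S X Z) Y := by
    intro X Y Z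
    simp only [hS, map_add, LinearMap.add_apply, neg_add]
    rw [hmetric (J X) Y Z, hJ_move, hmetric X Y (J Z), hAK]
  refine eq_neg_of_add_eq_zero_left (hnd _ fun Z => ?_)
  exact eq_zero_of_symm_of_antisymm_s15 (fun X Y Z => B (S X Y) Z)
    (fun X Y Z => by rw [hS_symm]) hS_skew X Y Z

theorem two_smul_nabla (htors : ∀ X Y, nabla X Y - nabla Y X = ⁅X, Y⁆)
    (hJ2 : ∀ X, J (J X) = -X) (hAK : ∀ X Y, nabla X (J Y) = J (nabla X Y))
    (hJleft : ∀ X Y, nabla (J X) Y = -J (nabla X Y)) (X Y : V) :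
    (2 : ℝ) • nabla X Y = ⁅X, Y⁆ + J ⁅J X, Y⁆ := by
  have h := congrArg J (htors (J X) Y)
  rw [hJleft, hAK, map_sub, map_neg, hJ2, hJ2] at h
  linear_combination (norm := module) htors X Y + h

theorem four_smul_nabla_nabla (hJ2 : ∀ X, J (J X) = -X)
    (hAK : ∀ X Y, nabla X (J Y) = J (nabla X Y))
    (h2 : ∀ X Y, (2 : ℝ) • nabla X Y = ⁅X, Y⁆ + J ⁅J X, Y⁆) (X Y Z : V) :
    (4 : ℝ) • nabla X (nabla Y Z)
      = ⁅X, ⁅Y, Z⁆⁆ + J ⁅J X, ⁅Y, Z⁆⁆ + J ⁅X, ⁅J Y, Z⁆⁆ - ⁅J X, ⁅J Y, Z⁆⁆ :=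
  calc (4 : ℝ) • nabla X (nabla Y Z) = (2 : ℝ) • nabla X ((2 : ℝ) • nabla Y Z) := by
        rw [map_smul, smul_smul]; norm_num
    _ = (2 : ℝ) • nabla X ⁅Y, Z⁆ + J ((2 : ℝ) • nabla X ⁅J Y, Z⁆) := by
        rw [h2 Y Z, map_add, hAK, smul_add, map_smul]
    _ = _ := by rw [h2, h2, map_add, hJ2]; abel

theorem nabla_comm (hJ2 : ∀ X, J (J X) = -X) (hAK : ∀ X Y, nabla X (J Y) = J (nabla X Y))
    (habel : ∀ X Y, ⁅J X, J Y⁆ = ⁅X, Y⁆)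
    (h2 : ∀ X Y, (2 : ℝ) • nabla X Y = ⁅X, Y⁆ + J ⁅J X, Y⁆) (X Y Z : V) :
    nabla X (nabla Y Z) = nabla Y (nabla X Z) := by
  refine sub_eq_zero.mp ((smul_eq_zero_iff_right (four_ne_zero' ℝ)).mp ?_)
  rw [smul_sub, four_smul_nabla_nabla hJ2 hAK h2, four_smul_nabla_nabla hJ2 hAK h2]
  have e1 := lie_lie X Y Z
  have e2 := lie_lie (J X) (J Y) Z
  have e3 := congrArg J (lie_lie (J X) Y Z)
  have e4 := congrArg J (lie_lie X (J Y) Z)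
  rw [habel] at e2
  rw [lie_map_right_of_abelian hJ2 habel, neg_lie, map_neg, map_sub] at e4
  rw [map_sub] at e3
  linear_combination (norm := module) e2 - e1 - e3 - e4

end AbelianComplexStructure

/-- An anti-Kähler Lie algebra structure with abelian complex structure is
flat: the curvature `R(X,Y)Z = ∇_X ∇_Y Z - ∇_Y ∇_X Z - ∇_{[X,Y]} Z`
vanishes identically (equivalently `∇_{[X,Y]} Z = 0` for all `X, Y, Z`). -/
theorem flat_of_antiKaehler_abelian
    (V : Type*) [LieRing V] [LieAlgebra ℝ V]
    (B : V →ₗ[ℝ] V →ₗ[ℝ] ℝ)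
    (hsymm : ∀ X Y, B X Y = B Y X)
    (hnd : ∀ X, (∀ Y, B X Y = 0) → X = 0)
    (J : V →ₗ[ℝ] V) (hJ2 : ∀ X, J (J X) = -X)
    (hJB : ∀ X Y, B (J X) (J Y) = - B X Y)
    (nabla : V →ₗ[ℝ] V →ₗ[ℝ] V)
    (hKoszul : ∀ X Y Z, 2 * B (nabla X Y) Z
        = B ⁅X, Y⁆ Z - B ⁅Y, Z⁆ X + B ⁅Z, X⁆ Y)
    (hAK : ∀ X Y, nabla X (J Y) = J (nabla X Y))
    (habel : ∀ X Y, ⁅J X, J Y⁆ = ⁅X, Y⁆) :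
    (∀ X Y Z, nabla X (nabla Y Z) - nabla Y (nabla X Z) - nabla ⁅X, Y⁆ Z = 0) ∧
    (∀ X Y Z : V, nabla ⁅X, Y⁆ Z = 0) := by
  have hmetric := metric_of_koszul hKoszul
  have htors := torsion_free_of_koszul hnd hKoszul
  have hJleft := nabla_map_left hnd hmetric htors hJ2 hJB hAK habel
  have hcomm := nabla_comm hJ2 hAK habel (two_smul_nabla htors hJ2 hAK hJleft)
  have hvanish : ∀ X Y Z : V, nabla ⁅X, Y⁆ Z = 0 := by
    intro X Y Z
    have h := curvature_map_map_eq_neg hsymm hnd hmetric htors hJB hAK X Y Z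
    rw [curvature_of_comm hcomm, curvature_of_comm hcomm, habel] at h
    linear_combination (norm := module) (-2⁻¹ : ℝ) • h
  refine ⟨fun X Y Z => ?_, hvanish⟩
  rw [hcomm X Y Z, sub_self, zero_sub, hvanish, neg_zero]
end

section
/- Let 𝔤 be a Lie algebra with anti-Kähler structure (⟨·,·⟩, J), J abelian. Then for all X,Y,Z ∈ 𝔤: [J[X,Y], Z] = J[[X,Y], Z]. -/
/-
For the Levi-Civita connection `∇` of `⟨·,·⟩`, parallelism of `J` together with abelianness
forces `∇_{JX} = -J ∇_X`. Hence the curvature satisfies `R(JX,JY) + R(X,Y) = -2 ∇_{[X,Y]}`, while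
pair symmetry of `⟨R(X,Y)Z, W⟩` and `⟨JU, JW⟩ = -⟨U, W⟩` give `R(JX,JY) = -R(X,Y)`. So `∇` is
flat along brackets, `∇_{[X,Y]} = 0`, and torsion-freeness turns this into
`[[X,Y],Z] = -∇_Z [X,Y]`; applying the same to `JZ` and using `∇_{JZ} = -J ∇_Z` gives the claim.
-/

theorem eq_zero_of_symm_of_antisymm_s16 {α R : Type*} [NonAssocRing R] [NoZeroDivisors R]
    [CharZero R] (e : α → α → α → R) (hsymm : ∀ x y z, e x y z = e y x z)
    (hanti : ∀ x y z, e x y z = -e x z y) (x y z : α) : e x y z = 0 := by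
  refine CharZero.eq_neg_self_iff.mp ?_
  calc e x y z = -e x z y := hanti x y z
    _ = -e z x y := by rw [hsymm]
    _ = e z y x := by rw [hanti z x y, neg_neg]
    _ = e y z x := hsymm z y x
    _ = -e y x z := hanti y z x
    _ = -e x y z := by rw [hsymm]

theorem pair_symm_of_bianchi {α R : Type*} [CommRing R] [NoZeroDivisors R] [CharZero R]
    (f : α → α → α → α → R)
    (hleft : ∀ x y z w, f x y z w = -f y x z w) (hright : ∀ x y z w, f x y z w = -f x y w z)
    (hbianchi : ∀ x y z w, f x y z w + f y z x w + f z x y w = 0) (x y z w : α) :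
    f x y z w = f z w x y := by
  have h : 2 * (f x y z w - f z w x y) = 0 := by
    linear_combination hbianchi x y z w + hbianchi y z w x - hbianchi z w x y - hbianchi w x y z
      - hleft w y z x - hleft z x y w - hright y z x w - hright z w y x + hright y w z x
      + hright w x z y + hright x z y w + hright x y z w
  exact sub_eq_zero.mp ((mul_eq_zero.mp h).resolve_left two_ne_zero)

namespace LieConnection

variable {V : Type*} [LieRing V] [Module ℝ V]

def IsKoszul (B : V →ₗ[ℝ] V →ₗ[ℝ] ℝ) (nabla : V →ₗ[ℝ] V →ₗ[ℝ] V) : Prop :=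
  ∀ X Y Z, 2 * B (nabla X Y) Z = B ⁅X, Y⁆ Z - B ⁅Y, Z⁆ X + B ⁅Z, X⁆ Y

def IsTorsionFree (nabla : V →ₗ[ℝ] V →ₗ[ℝ] V) : Prop :=
  ∀ X Y, nabla X Y - nabla Y X = ⁅X, Y⁆

def IsMetric (B : V →ₗ[ℝ] V →ₗ[ℝ] ℝ) (nabla : V →ₗ[ℝ] V →ₗ[ℝ] V) : Prop :=
  ∀ X Y Z, B (nabla X Y) Z + B (nabla X Z) Y = 0

def curvature (nabla : V →ₗ[ℝ] V →ₗ[ℝ] V) (X Y Z : V) : V :=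
  nabla X (nabla Y Z) - nabla Y (nabla X Z) - nabla ⁅X, Y⁆ Z

variable {B : V →ₗ[ℝ] V →ₗ[ℝ] ℝ} {nabla : V →ₗ[ℝ] V →ₗ[ℝ] V}

theorem apply_lie_swap (X Y Z : V) : B ⁅X, Y⁆ Z = -B ⁅Y, X⁆ Z := by
  rw [← lie_skew, map_neg, LinearMap.neg_apply]

theorem eq_of_forall_apply_eq (hnd : ∀ X, (∀ Y, B X Y = 0) → X = 0) {X X' : V}
    (h : ∀ Y, B X Y = B X' Y) : X = X' :=
  sub_eq_zero.mp <| hnd _ fun Y ↦ by rw [map_sub, LinearMap.sub_apply, h, sub_self]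

theorem IsKoszul.isMetric (h : IsKoszul B nabla) : IsMetric B nabla := fun X Y Z ↦ by
  linarith [h X Y Z, h X Z Y, apply_lie_swap (B := B) Y X Z, apply_lie_swap (B := B) Z Y X,
    apply_lie_swap (B := B) X Z Y]

theorem IsKoszul.isTorsionFree (h : IsKoszul B nabla) (hnd : ∀ X, (∀ Y, B X Y = 0) → X = 0) :
    IsTorsionFree nabla := fun X Y ↦ eq_of_forall_apply_eq hnd fun Z ↦ by
  rw [map_sub, LinearMap.sub_apply]
  linarith [h X Y Z, h Y X Z, apply_lie_swap (B := B) Y X Z, apply_lie_swap (B := B) X Z Y,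
    apply_lie_swap (B := B) Z Y X]

theorem curvature_swap (X Y Z : V) : curvature nabla Y X Z = -curvature nabla X Y Z := by
  rw [curvature, curvature, ← lie_skew, map_neg, LinearMap.neg_apply]
  abel

theorem IsTorsionFree.curvature_bianchi (h : IsTorsionFree nabla) (X Y Z : V) :
    curvature nabla X Y Z + curvature nabla Y Z X + curvature nabla Z X Y = 0 := by
  have nabla_lie : ∀ U P Q : V, nabla U ⁅P, Q⁆ = nabla U (nabla P Q) - nabla U (nabla Q P) :=
    fun U P Q ↦ by rw [← h P Q, map_sub]
  calc curvature nabla X Y Z + curvature nabla Y Z X + curvature nabla Z X Y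
      = (nabla X ⁅Y, Z⁆ - nabla ⁅Y, Z⁆ X) + (nabla Y ⁅Z, X⁆ - nabla ⁅Z, X⁆ Y)
          + (nabla Z ⁅X, Y⁆ - nabla ⁅X, Y⁆ Z) := by
        simp only [curvature, nabla_lie]
        abel
    _ = ⁅X, ⁅Y, Z⁆⁆ + ⁅Y, ⁅Z, X⁆⁆ + ⁅Z, ⁅X, Y⁆⁆ := by rw [h, h, h]
    _ = 0 := lie_jacobi X Y Z

theorem IsMetric.curvature_antisymm (h : IsMetric B nabla) (hsymm : ∀ X Y, B X Y = B Y X)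
    (X Y Z W : V) : B (curvature nabla X Y Z) W = -B (curvature nabla X Y W) Z := by
  simp only [curvature, map_sub, LinearMap.sub_apply]
  linarith [h X (nabla Y Z) W, h X (nabla Y W) Z, h Y (nabla X Z) W, h Y (nabla X W) Z,
    h ⁅X, Y⁆ Z W, h Y Z (nabla X W), h X Z (nabla Y W), hsymm (nabla X W) (nabla Y Z),
    hsymm (nabla X Z) (nabla Y W)]

section ComplexStructure

variable {J : V →ₗ[ℝ] V}

theorem apply_J_left (hJ2 : ∀ X, J (J X) = -X) (hJB : ∀ X Y, B (J X) (J Y) = -B X Y) (X Y : V) :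
    B (J X) Y = B X (J Y) := by
  have h := hJB X (J Y)
  rwa [hJ2, map_neg, neg_inj] at h

theorem lie_J_left (hJ2 : ∀ X, J (J X) = -X) (habel : ∀ X Y, ⁅J X, J Y⁆ = ⁅X, Y⁆) (X Y : V) :
    ⁅J X, Y⁆ = -⁅X, J Y⁆ := by
  rw [← habel X (J Y), hJ2, lie_neg, neg_neg]

theorem IsMetric.J_nabla_antisymm (h : IsMetric B nabla) (hJ2 : ∀ X, J (J X) = -X)
    (hJB : ∀ X Y, B (J X) (J Y) = -B X Y) (hAK : ∀ X Y, nabla X (J Y) = J (nabla X Y))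
    (X Y Z : V) : B (J (nabla X Y)) Z + B (J (nabla X Z)) Y = 0 := by
  rw [apply_J_left hJ2 hJB, ← hAK, h]

theorem nabla_J_left (hM : IsMetric B nabla) (hT : IsTorsionFree nabla)
    (hnd : ∀ X, (∀ Y, B X Y = 0) → X = 0) (hJ2 : ∀ X, J (J X) = -X)
    (hJB : ∀ X Y, B (J X) (J Y) = -B X Y) (hAK : ∀ X Y, nabla X (J Y) = J (nabla X Y))
    (habel : ∀ X Y, ⁅J X, J Y⁆ = ⁅X, Y⁆) (X Y : V) : nabla (J X) Y = -J (nabla X Y) := by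
  -- `E U = ∇_{JU} + J ∇_U` is `B`-skew and `E` is symmetric, so `⟨E U W, Z⟩` vanishes.
  set E : V → V → V := fun U W ↦ nabla (J U) W + J (nabla U W) with hE
  have nabla_J_left_eq : ∀ U W, nabla (J U) W = J (nabla W U) + ⁅J U, W⁆ := fun U W ↦ by
    rw [← hAK, ← hT, add_sub_cancel]
  have hsymm : ∀ U W, E U W = E W U := fun U W ↦ by
    simp only [hE, nabla_J_left_eq, lie_J_left hJ2 habel U W, ← lie_skew U (J W)]
    abel
  have hanti : ∀ U W Z, B (E U W) Z = -B (E U Z) W := fun U W Z ↦ by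
    simp only [hE, map_add, LinearMap.add_apply]
    linarith [hM (J U) W Z, hM.J_nabla_antisymm hJ2 hJB hAK U W Z]
  refine eq_neg_iff_add_eq_zero.mpr (hnd _ fun Z ↦ ?_)
  exact eq_zero_of_symm_of_antisymm_s16 (fun U W Z ↦ B (E U W) Z) (fun U W Z ↦ by rw [hsymm]) hanti
    X Y Z

theorem curvature_J_right (hAK : ∀ X Y, nabla X (J Y) = J (nabla X Y)) (X Y Z : V) :
    curvature nabla X Y (J Z) = J (curvature nabla X Y Z) := by
  simp only [curvature, hAK, map_sub]

theorem curvature_J_J_add_curvature (hJ2 : ∀ X, J (J X) = -X)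
    (hAK : ∀ X Y, nabla X (J Y) = J (nabla X Y)) (habel : ∀ X Y, ⁅J X, J Y⁆ = ⁅X, Y⁆)
    (hJleft : ∀ X Y, nabla (J X) Y = -J (nabla X Y)) (X Y Z : V) :
    curvature nabla (J X) (J Y) Z + curvature nabla X Y Z = -(2 : ℝ) • nabla ⁅X, Y⁆ Z := by
  simp only [curvature, hJleft, habel, map_neg, hAK, hJ2, neg_neg]
  module

theorem nabla_lie_eq_zero (hM : IsMetric B nabla) (hT : IsTorsionFree nabla)
    (hsymm : ∀ X Y, B X Y = B Y X) (hnd : ∀ X, (∀ Y, B X Y = 0) → X = 0)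
    (hJ2 : ∀ X, J (J X) = -X) (hJB : ∀ X Y, B (J X) (J Y) = -B X Y)
    (hAK : ∀ X Y, nabla X (J Y) = J (nabla X Y)) (habel : ∀ X Y, ⁅J X, J Y⁆ = ⁅X, Y⁆)
    (X Y Z : V) : nabla ⁅X, Y⁆ Z = 0 := by
  set R : V → V → V → V → ℝ := fun X₁ X₂ X₃ X₄ ↦ B (curvature nabla X₁ X₂ X₃) X₄ with hR
  have pair : ∀ X₁ X₂ X₃ X₄, R X₁ X₂ X₃ X₄ = R X₃ X₄ X₁ X₂ := by
    refine pair_symm_of_bianchi R (fun X₁ X₂ X₃ X₄ ↦ ?_) (hM.curvature_antisymm hsymm) ?_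
    · simp only [hR]
      rw [curvature_swap X₂ X₁, map_neg, LinearMap.neg_apply]
    · intro X₁ X₂ X₃ X₄
      simp only [hR, ← LinearMap.add_apply, ← map_add, hT.curvature_bianchi, map_zero,
        LinearMap.zero_apply]
  have hJJ : ∀ W, R (J X) (J Y) Z W = -R X Y Z W := fun W ↦
    calc R (J X) (J Y) Z W = R Z W (J X) (J Y) := pair _ _ _ _
      _ = B (J (curvature nabla Z W X)) (J Y) := by simp only [hR, curvature_J_right hAK]
      _ = -R Z W X Y := hJB _ _
      _ = -R X Y Z W := by rw [pair]
  refine hnd _ fun W ↦ ?_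
  have hsum := congrArg (B · W) <| curvature_J_J_add_curvature hJ2 hAK habel
    (nabla_J_left hM hT hnd hJ2 hJB hAK habel) X Y Z
  simp only [map_add, LinearMap.add_apply, map_smul, LinearMap.smul_apply, smul_eq_mul] at hsum
  linarith [hJJ W]

end ComplexStructure

end LieConnection

/-- For an anti-Kähler Lie algebra structure with abelian complex structure,
`[J[X,Y], Z] = J[[X,Y], Z]` for all `X, Y, Z`. -/
theorem bracket_J_identity_of_antiKaehler_abelian
    (V : Type*) [LieRing V] [LieAlgebra ℝ V]
    (B : V →ₗ[ℝ] V →ₗ[ℝ] ℝ)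
    (hsymm : ∀ X Y, B X Y = B Y X)
    (hnd : ∀ X, (∀ Y, B X Y = 0) → X = 0)
    (J : V →ₗ[ℝ] V) (hJ2 : ∀ X, J (J X) = -X)
    (hJB : ∀ X Y, B (J X) (J Y) = - B X Y)
    (nabla : V →ₗ[ℝ] V →ₗ[ℝ] V)
    (hKoszul : ∀ X Y Z, 2 * B (nabla X Y) Z
        = B ⁅X, Y⁆ Z - B ⁅Y, Z⁆ X + B ⁅Z, X⁆ Y)
    (hAK : ∀ X Y, nabla X (J Y) = J (nabla X Y))
    (habel : ∀ X Y, ⁅J X, J Y⁆ = ⁅X, Y⁆) :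
    ∀ X Y Z : V, ⁅J ⁅X, Y⁆, Z⁆ = J ⁅⁅X, Y⁆, Z⁆ := by
  have hM : LieConnection.IsMetric B nabla := LieConnection.IsKoszul.isMetric hKoszul
  have hT : LieConnection.IsTorsionFree nabla := LieConnection.IsKoszul.isTorsionFree hKoszul hnd
  have flat := LieConnection.nabla_lie_eq_zero hM hT hsymm hnd hJ2 hJB hAK habel
  intro X Y Z
  calc ⁅J ⁅X, Y⁆, Z⁆ = -⁅⁅X, Y⁆, J Z⁆ := LieConnection.lie_J_left hJ2 habel _ _
    _ = nabla (J Z) ⁅X, Y⁆ := by rw [← hT ⁅X, Y⁆ (J Z), flat, zero_sub, neg_neg]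
    _ = -J (nabla Z ⁅X, Y⁆) := LieConnection.nabla_J_left hM hT hnd hJ2 hJB hAK habel _ _
    _ = J ⁅⁅X, Y⁆, Z⁆ := by rw [← hT ⁅X, Y⁆ Z, flat, zero_sub, map_neg]
end

section
/- Let 𝔤 = ℝ⁴ with basis {e₁,e₂,e₃,e₄} and brackets [e₁,e₃] = e₃, [e₁,e₄] = e₄, [e₂,e₃] = e₄, [e₂,e₄] = -e₃ (the realification of aff(ℂ)). Define J by Je₁ = e₂, Je₂ = -e₁, Je₃ = e₄, Je₄ = -e₃, and the symmetric bilinear form with ⟨e₁,e₁⟩ = 1, ⟨e₂,e₂⟩ = -1, ⟨e₃,e₃⟩ = 1, ⟨e₄,e₄⟩ = -1 and all other pairings zero. Then J is a bi-invariant complex structure ([JX,Y] = J[X,Y]), (⟨·,·⟩, J) is anti-Hermitian (⟨JX,JY⟩ = -⟨X,Y⟩), and the Levi-Civita connection satisfies ∇_X(JY) = J∇_X Y for all X,Y ∈ 𝔤, i.e. the structure is anti-Kähler. -/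
/-!
Bi-invariance of `J` and anti-Hermitianity of `B` are bilinear identities, so they are checked on
the basis. The Kähler condition needs no Christoffel symbols: anti-Hermitianity and `J² = -1` make
`J` self-adjoint for `B`, and then, by bi-invariance, the Koszul formula gives the same value for
`2⟨∇_X (JY), Z⟩` and `2⟨∇_X Y, JZ⟩ = 2⟨J ∇_X Y, Z⟩`; nondegeneracy of `B` concludes.
-/

open LinearMap

section Koszul

variable {R L : Type*} [CommRing R] [LieRing L] [LieAlgebra R L]

theorem lie_map_right_of_map_lie {J : L →ₗ[R] L} (hJ : ∀ X Y, ⁅J X, Y⁆ = J ⁅X, Y⁆) (X Y : L) :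
    ⁅X, J Y⁆ = J ⁅X, Y⁆ := by
  rw [← lie_skew, hJ, ← map_neg, lie_skew]

theorem isAdjointPair_self_of_map_map_eq_neg_s19 {B : L →ₗ[R] L →ₗ[R] R} {J : L →ₗ[R] L}
    (hJJ : ∀ X, J (J X) = -X) (hB : ∀ X Y, B (J X) (J Y) = -B X Y) :
    IsAdjointPair B B J J := fun X Y => by
  rw [← neg_neg (B (J X) Y), ← hB, hJJ, map_neg, LinearMap.neg_apply, neg_neg]

theorem koszul_apply_map_eq_map_apply [IsDomain R] [NeZero (2 : R)]
    {B : L →ₗ[R] L →ₗ[R] R} (hB : B.SeparatingLeft) {J : L →ₗ[R] L}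
    (hJ : ∀ X Y, ⁅J X, Y⁆ = J ⁅X, Y⁆) (hJB : IsAdjointPair B B J J)
    {nabla : L →ₗ[R] L →ₗ[R] L}
    (hKoszul : ∀ X Y Z, 2 * B (nabla X Y) Z = B ⁅X, Y⁆ Z - B ⁅Y, Z⁆ X + B ⁅Z, X⁆ Y)
    (X Y : L) : nabla X (J Y) = J (nabla X Y) := by
  rw [← sub_eq_zero]
  refine hB _ fun Z => ?_
  have hJr := lie_map_right_of_map_lie hJ
  have hJB' : ∀ U W, B (J U) W = B U (J W) := hJB
  have h2 : 2 * B (nabla X (J Y)) Z = 2 * B (J (nabla X Y)) Z := by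
    simp only [hJB', hKoszul, hJ, hJr]
  rw [map_sub, LinearMap.sub_apply, mul_left_cancel₀ two_ne_zero h2, sub_self]

end Koszul

section AffC

variable {V : Type*} [AddCommGroup V] [Module ℝ V] (e : Module.Basis (Fin 4) ℝ V)

theorem affC_map_map {J : V →ₗ[ℝ] V}
    (hJ1 : J (e 0) = e 1) (hJ2 : J (e 1) = -e 0) (hJ3 : J (e 2) = e 3) (hJ4 : J (e 3) = -e 2)
    (X : V) : J (J X) = -X := by
  have hJJ : J ∘ₗ J = -LinearMap.id := e.ext fun i => by
    fin_cases i <;> simp [hJ1, hJ2, hJ3, hJ4]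
  exact LinearMap.congr_fun hJJ X

theorem affC_map_map_eq_neg {J : V →ₗ[ℝ] V}
    (hJ1 : J (e 0) = e 1) (hJ2 : J (e 1) = -e 0) (hJ3 : J (e 2) = e 3) (hJ4 : J (e 3) = -e 2)
    {B : V →ₗ[ℝ] V →ₗ[ℝ] ℝ}
    (hB1 : B (e 0) (e 0) = 1) (hB2 : B (e 1) (e 1) = -1)
    (hB3 : B (e 2) (e 2) = 1) (hB4 : B (e 3) (e 3) = -1)
    (hBoff : ∀ i j : Fin 4, i ≠ j → B (e i) (e j) = 0) (X Y : V) :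
    B (J X) (J Y) = -B X Y := by
  have hBJJ : (B ∘ₗ J).compl₂ J = -B := LinearMap.ext_basis e e fun i j => by
    fin_cases i <;> fin_cases j <;>
      simp [hJ1, hJ2, hJ3, hJ4, hB1, hB2, hB3, hB4, hBoff]
  exact LinearMap.congr_fun₂ hBJJ X Y

end AffC

theorem affC_lie_map {V : Type*} [LieRing V] [LieAlgebra ℝ V] (e : Module.Basis (Fin 4) ℝ V)
    (h13 : ⁅e 0, e 2⁆ = e 2) (h14 : ⁅e 0, e 3⁆ = e 3)
    (h23 : ⁅e 1, e 2⁆ = e 3) (h24 : ⁅e 1, e 3⁆ = -e 2)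
    (h12 : ⁅e 0, e 1⁆ = 0) (h34 : ⁅e 2, e 3⁆ = 0) {J : V →ₗ[ℝ] V}
    (hJ1 : J (e 0) = e 1) (hJ2 : J (e 1) = -e 0) (hJ3 : J (e 2) = e 3) (hJ4 : J (e 3) = -e 2)
    (X Y : V) : ⁅J X, Y⁆ = J ⁅X, Y⁆ := by
  have h31 : ⁅e 2, e 0⁆ = -e 2 := by rw [← lie_skew, h13]
  have h41 : ⁅e 3, e 0⁆ = -e 3 := by rw [← lie_skew, h14]
  have h32 : ⁅e 2, e 1⁆ = -e 3 := by rw [← lie_skew, h23]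
  have h42 : ⁅e 3, e 1⁆ = e 2 := by rw [← lie_skew, h24, neg_neg]
  have h21 : ⁅e 1, e 0⁆ = 0 := by rw [← lie_skew, h12, neg_zero]
  have h43 : ⁅e 3, e 2⁆ = 0 := by rw [← lie_skew, h34, neg_zero]
  have hadJ : (LieAlgebra.ad ℝ V : V →ₗ[ℝ] Module.End ℝ V) ∘ₗ J
      = (LieAlgebra.ad ℝ V : V →ₗ[ℝ] V →ₗ[ℝ] V).compr₂ J := LinearMap.ext_basis e e fun i j => by
    fin_cases i <;> fin_cases j <;>
      simp [hJ1, hJ2, hJ3, hJ4, h12, h13, h14, h23, h24, h34, h21, h31, h41, h32, h42, h43]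
  simpa using LinearMap.congr_fun₂ hadJ X Y

/-- The realification of `aff(ℂ)`: a real Lie algebra with basis
`e₁, e₂, e₃, e₄` and brackets `[e₁,e₃] = e₃`, `[e₁,e₄] = e₄`, `[e₂,e₃] = e₄`,
`[e₂,e₄] = -e₃` (all other basis brackets zero), with `J e₁ = e₂`,
`J e₂ = -e₁`, `J e₃ = e₄`, `J e₄ = -e₃` and the diagonal symmetric form
`⟨e₁,e₁⟩ = 1`, `⟨e₂,e₂⟩ = -1`, `⟨e₃,e₃⟩ = 1`, `⟨e₄,e₄⟩ = -1`, carries a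
left invariant anti-Kähler structure: `J` is bi-invariant, the form is
anti-Hermitian, and the Levi-Civita connection (Koszul formula) satisfies
`∇_X (JY) = J ∇_X Y`. -/
theorem affC_antiKaehler
    (V : Type*) [LieRing V] [LieAlgebra ℝ V]
    (e : Module.Basis (Fin 4) ℝ V)
    (h13 : ⁅e 0, e 2⁆ = e 2) (h14 : ⁅e 0, e 3⁆ = e 3)
    (h23 : ⁅e 1, e 2⁆ = e 3) (h24 : ⁅e 1, e 3⁆ = -e 2)
    (h12 : ⁅e 0, e 1⁆ = 0) (h34 : ⁅e 2, e 3⁆ = 0)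
    (J : V →ₗ[ℝ] V)
    (hJ1 : J (e 0) = e 1) (hJ2' : J (e 1) = -e 0)
    (hJ3 : J (e 2) = e 3) (hJ4 : J (e 3) = -e 2)
    (B : V →ₗ[ℝ] V →ₗ[ℝ] ℝ)
    (hB1 : B (e 0) (e 0) = 1) (hB2 : B (e 1) (e 1) = -1)
    (hB3 : B (e 2) (e 2) = 1) (hB4 : B (e 3) (e 3) = -1)
    (hBoff : ∀ i j : Fin 4, i ≠ j → B (e i) (e j) = 0)
    (nabla : V →ₗ[ℝ] V →ₗ[ℝ] V)
    (hKoszul : ∀ X Y Z, 2 * B (nabla X Y) Z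
        = B ⁅X, Y⁆ Z - B ⁅Y, Z⁆ X + B ⁅Z, X⁆ Y) :
    (∀ X Y : V, ⁅J X, Y⁆ = J ⁅X, Y⁆) ∧
    (∀ X Y : V, B (J X) (J Y) = - B X Y) ∧
    (∀ X Y : V, nabla X (J Y) = J (nabla X Y)) := by
  have hJJ := affC_map_map e hJ1 hJ2' hJ3 hJ4
  have hBJJ := affC_map_map_eq_neg e hJ1 hJ2' hJ3 hJ4 hB1 hB2 hB3 hB4 hBoff
  have hJlie := affC_lie_map e h13 h14 h23 h24 h12 h34 hJ1 hJ2' hJ3 hJ4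
  have hBsep : B.SeparatingLeft :=
    IsOrthoᵢ.separatingLeft_of_not_isOrtho_basis_self e (fun i j hij => hBoff i j hij) fun i => by
      fin_cases i <;> simp [hB1, hB2, hB3, hB4]
  exact ⟨hJlie, hBJJ, koszul_apply_map_eq_map_apply hBsep hJlie
    (isAdjointPair_self_of_map_map_eq_neg_s19 hJJ hBJJ) hKoszul⟩
end
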